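/- For every integer n, the row vectors v = (3, 0, −7, −3n−2) and w = (0, 1, 0, −n−2) satisfy v B_n = v and w B_n = w; that is, v and w are fixed under right multiplication by B_n. -/

import Mathlib

open Matrix

noncomputable def Bmat (n : ℤ) : Matrix (Fin 4) (Fin 4) ℝ :=
  !![8*(n:ℝ)^2+27*(n:ℝ)+17, -(n:ℝ)^2-5*(n:ℝ)-6, -21*(n:ℝ)^2-70*(n:ℝ)-42, -2*(n:ℝ)^2-6*(n:ℝ);
     8*(n:ℝ)^2+19*(n:ℝ)+6,  -(n:ℝ)^2-4*(n:ℝ)-3, -21*(n:ℝ)^2-49*(n:ℝ)-14, -2*(n:ℝ)^2-4*(n:ℝ);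
     8*(n:ℝ)+6,             -(n:ℝ)-2,           -21*(n:ℝ)-15,            -2*(n:ℝ);
     8*(n:ℝ)+3,             -(n:ℝ)-2,           -21*(n:ℝ)-7,             -2*(n:ℝ)+1]

/-- For every integer `n`, the row vectors `v = (3, 0, −7, −3n−2)` and `w = (0, 1, 0, −n−2)`
are fixed under right multiplication by `B_n`. -/
theorem statement_10 (n : ℤ) :
    Matrix.vecMul ![(3:ℝ), 0, -7, -3*(n:ℝ)-2] (Bmat n) = ![(3:ℝ), 0, -7, -3*(n:ℝ)-2] ∧
    Matrix.vecMul ![(0:ℝ), 1, 0, -(n:ℝ)-2] (Bmat n) = ![(0:ℝ), 1, 0, -(n:ℝ)-2] := by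
  constructor <;> ext i <;> fin_cases i <;>
    simp [Bmat, vecMul, dotProduct, Fin.sum_univ_four] <;> ring
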